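/- arXiv:1404.0836 — 4 statements merged into one kernel-verified Lean document; each statement's English description precedes it below -/
import Mathlib

section
/- If SC is an efficient solution concept (SC(Γ,u) ≠ ∅ for every utility profile u) that is weakly Pareto (SC never selects a strongly Pareto-dominated strategy profile), then for any game frame Γ and any objective γ ≠ ∅, the grand coalition N defends γ: Γ ⊨_SC ⟨N⟩ γ. -/
/-- Coalition `D` supports objective `γ` given utilities `u`. -/
def Supports {ι : Type*} {S : ι → Type*} (D : Set ι)
    (γ : Set (∀ i, S i)) (u : ι → (∀ i, S i) → ℝ) : Prop :=
  ∀ i ∈ D, ∀ s ∈ γ, ∀ s' ∉ γ, u i s' < u i s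

/-- Correctness wrt objective `γ` under solution concept `SC` and utilities `u`. -/
def Correct {ι : Type*} {S : ι → Type*}
    (SC : (ι → (∀ i, S i) → ℝ) → Set (∀ i, S i))
    (γ : Set (∀ i, S i)) (u : ι → (∀ i, S i) → ℝ) : Prop :=
  (SC u ≠ ∅ → SC u ⊆ γ) ∧ (SC u = ∅ → γ = Set.univ)

/-- `γ` is defended by coalition `D` under solution concept `SC`. -/
def Defends {ι : Type*} {S : ι → Type*}
    (SC : (ι → (∀ i, S i) → ℝ) → Set (∀ i, S i))
    (D : Set ι) (γ : Set (∀ i, S i)) : Prop :=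
  ∀ u, Supports D γ u → Correct SC γ u

/-- `SC` never selects a strongly Pareto-dominated strategy profile. -/
def WeaklyPareto {ι : Type*} {S : ι → Type*}
    (SC : (ι → (∀ i, S i) → ℝ) → Set (∀ i, S i)) : Prop :=
  ∀ u s, s ∈ SC u → ¬ ∃ s', ∀ i, u i s < u i s'

/-- `SC` never returns the empty set. -/
def Efficient {ι : Type*} {S : ι → Type*}
    (SC : (ι → (∀ i, S i) → ℝ) → Set (∀ i, S i)) : Prop :=
  ∀ u, (SC u).Nonempty

theorem stmt_2 {ι : Type*} (S : ι → Type*)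
    (SC : (ι → (∀ i, S i) → ℝ) → Set (∀ i, S i))
    (hEff : Efficient SC) (hWP : WeaklyPareto SC)
    (γ : Set (∀ i, S i)) (hγ : γ.Nonempty) :
    Defends SC (Set.univ : Set ι) γ := by
  intro u hSup
  obtain ⟨t, ht⟩ := hEff u
  constructor
  · intro _ s hs
    by_contra hsγ
    obtain ⟨g, hg⟩ := hγ
    exact hWP u s hs ⟨g, fun i => hSup i (Set.mem_univ i) g hg s hsγ⟩
  · intro h
    exact absurd (h ▸ ht) (Set.notMem_empty t)
end

section
/- Let Γ = (N, Σ) be a game frame with at least two players, each having at least two strategies, and let γ = {ω} be a singleton objective. Then the grand coalition does not defend γ under Nash equilibrium: Γ ⊭_NE ⟨N⟩ {ω}. -/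
/-- The set of pure Nash equilibria of the game with utilities `u`. -/
def NE {ι : Type*} [DecidableEq ι] {S : ι → Type*}
    (u : ι → (∀ i, S i) → ℝ) : Set (∀ i, S i) :=
  {s | ∀ i, ∀ t : S i, u i (Function.update s i t) ≤ u i s}

theorem stmt_4 {ι : Type*} [DecidableEq ι] [Nontrivial ι] (S : ι → Type*)
    (h2 : ∀ i, Nontrivial (S i)) (ω : ∀ i, S i) :
    ¬ Defends (NE (S := S)) (Set.univ : Set ι) {ω} := by
  classical
  intro hdef
  obtain ⟨a, b, hab⟩ := exists_pair_ne ι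
  obtain ⟨xa, hxa⟩ := exists_ne (ω a)
  obtain ⟨xb, hxb⟩ := exists_ne (ω b)
  set u : ι → (∀ i, S i) → ℝ := fun _ t => if t = ω then 1 else 0 with hu
  have hsupp : Supports (Set.univ : Set ι) {ω} u := by
    intro i _ s hs s' hs'
    simp only [Set.mem_singleton_iff] at hs
    simp only [Set.mem_singleton_iff] at hs'
    simp [hu, hs, hs']
  set s : ∀ i, S i := Function.update (Function.update ω a xa) b xb with hsdef
  have hsa : s a = xa := by
    rw [hsdef, Function.update_of_ne hab, Function.update_self]
  have hsb : s b = xb := by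
    rw [hsdef, Function.update_self]
  have hsne : s ≠ ω := fun h => hxb (by rw [← hsb, h])
  have hNE : s ∈ NE u := by
    intro i t
    have hdev : Function.update s i t ≠ ω := by
      intro h
      by_cases hia : i = a
      · subst hia
        apply hxb
        have := congrFun h b
        rwa [Function.update_of_ne hab.symm, hsb] at this
      · apply hxa
        have := congrFun h a
        rwa [Function.update_of_ne (Ne.symm hia), hsa] at this
    simp only [hu, hdev, if_false]
    positivity
  have hcor := hdef u hsupp
  have hne : NE u ≠ (∅ : Set (∀ i, S i)) := by
    intro h
    exact absurd (h ▸ hNE) (Set.notMem_empty s)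
  have := hcor.1 hne hNE
  exact hsne this
end

section
/- For any game frame Γ with at least two players each having at least two strategies, and any nontrivial objective γ (∅ ≠ γ ≠ Σ), there exists a utility profile u such that NE(Γ,u) ⊄ γ or NE(Γ,u) = ∅; consequently Γ is not valid with respect to γ under Nash equilibrium. -/
/-- Validity: correct for all utility profiles. -/
def Valid {ι : Type*} {S : ι → Type*}
    (SC : (ι → (∀ i, S i) → ℝ) → Set (∀ i, S i))
    (γ : Set (∀ i, S i)) : Prop :=
  ∀ u, Correct SC γ u

theorem stmt_15 {ι : Type*} [DecidableEq ι] [Nontrivial ι] (S : ι → Type*)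
    (h2 : ∀ i, Nontrivial (S i)) (γ : Set (∀ i, S i))
    (hne : γ.Nonempty) (hnu : γ ≠ Set.univ) :
    (∃ u : ι → (∀ i, S i) → ℝ, ¬ NE u ⊆ γ ∨ NE u = ∅) ∧
    ¬ Valid (NE (S := S)) γ := by
  have hS : ∀ i, Nonempty (S i) := fun i => @Nontrivial.to_nonempty _ (h2 i)
  have hNE : NE (fun _ _ => (0 : ℝ)) = (Set.univ : Set (∀ i, S i)) := by
    ext s; simp [NE]
  have hnsub : ¬ NE (fun (_ : ι) (_ : ∀ i, S i) => (0 : ℝ)) ⊆ γ := by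
    rw [hNE]
    intro h
    exact hnu (Set.eq_univ_of_univ_subset h)
  constructor
  · exact ⟨_, Or.inl hnsub⟩
  · intro hv
    have := (hv (fun _ _ => 0)).1
    rw [hNE] at this
    have hune : (Set.univ : Set (∀ i, S i)) ≠ ∅ := by
      simp [Set.univ_eq_empty_iff, not_isEmpty_of_nonempty, Classical.nonempty_pi.2 hS]
    exact hnu (Set.eq_univ_of_univ_subset (this hune))
end

section
/- If a strategy profile ω ∈ γ ⊆ Σ belongs to no strategic knot in γ (for a finite Σ), then the connected component of o(ω) in the induced deviation subgraph Dev_γ(Γ) contains no cycle, where the game frame has an injective outcome function identifiable with the identity. -/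
/-- `s'` is obtained from `s` by a unilateral deviation of one player. -/
def Unilateral {ι : Type*} [DecidableEq ι] {S : ι → Type*}
    (s s' : ∀ i, S i) : Prop :=
  ∃ i, s' = Function.update s i (s' i)

/-- `K` is a strategic knot in `γ`: its elements can be enumerated `s¹,…,sᵏ` so that
each `sʲ⁺¹` is a unilateral deviation from `sʲ`, and some earlier `sʲ` (`j < k`) is a
unilateral deviation from `sᵏ`. -/
def IsKnot {ι : Type*} [DecidableEq ι] {S : ι → Type*}
    (γ K : Set (∀ i, S i)) : Prop :=
  K.Nonempty ∧ K ⊆ γ ∧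
  ∃ (L : List (∀ i, S i)) (hne : L ≠ []),
    L.Nodup ∧ (∀ x, x ∈ L ↔ x ∈ K) ∧ L.Chain' Unilateral ∧
    ∃ j : Fin L.length, (j : ℕ) + 1 < L.length ∧
      Unilateral (L.getLast hne) (L.get j)

/-- The deviation closure of `γ`. -/
def Cl {ι : Type*} [DecidableEq ι] {S : ι → Type*}
    (γ : Set (∀ i, S i)) : Set (∀ i, S i) :=
  {s | ∃ i, ∃ t : S i, Function.update s i t ∈ γ}


/-- The deviation graph on strategy profiles (outcomes identified with profiles):
edges connect distinct profiles that differ in one player's strategy. -/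
def DevP {ι : Type*} [DecidableEq ι] (S : ι → Type*) : SimpleGraph (∀ i, S i) where
  Adj s s' := s ≠ s' ∧ (Unilateral s s' ∨ Unilateral s' s)
  symm := ⟨fun _ _ h => ⟨h.1.symm, h.2.symm⟩⟩
  loopless := ⟨fun _ h => h.1 rfl⟩

lemma Unilateral.symm {ι : Type*} [DecidableEq ι] {S : ι → Type*}
    {s s' : ∀ i, S i} (h : Unilateral s s') : Unilateral s' s := by
  obtain ⟨i, hi⟩ := h
  refine ⟨i, funext fun j => ?_⟩
  by_cases hj : j = i
  · subst hj; simp [Function.update]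
  · have := congrFun hi j
    simp [Function.update, hj] at this ⊢
    exact this.symm

open SimpleGraph in
/-- From a cycle we extract a list starting at the basepoint witnessing a knot shape. -/
lemma rot_lemma {V : Type*} {G : SimpleGraph V} {u : V} (c : G.Walk u u)
    (hc : c.IsCycle) :
    ∃ (L : List V) (hne : L ≠ []), L.Nodup ∧ L.head hne = u ∧
      (∀ x ∈ L, x ∈ c.support) ∧ List.Chain' G.Adj L ∧
      ∃ j : Fin L.length, (j : ℕ) + 1 < L.length ∧ G.Adj (L.getLast hne) (L.get j) := by
  have hsupp : c.support = u :: c.support.tail := c.support_eq_cons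
  set t := c.support.tail with ht
  have htnd : t.Nodup := hc.2
  have hlen3 : 3 ≤ c.length := hc.three_le_length
  have hslen : c.support.length = c.length + 1 := c.length_support
  have htlen : t.length = c.length := by
    have := hslen; rw [hsupp] at this; simpa using this
  have htne : t ≠ [] := by
    intro h; rw [h] at htlen; simp at htlen; omega
  have htlast : t.getLast htne = u := by
    have h1 : c.support.getLast? = some u := by
      rw [List.getLast?_eq_getLast (by simp), c.getLast_support]
    rw [hsupp, List.getLast?_cons, List.getLast?_eq_getLast htne] at h1
    simpa using h1
  have hdne : t.dropLast ≠ [] := by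
    intro h
    have := congrArg List.length h
    simp [List.length_dropLast, htlen] at this
    omega
  refine ⟨u :: t.dropLast, by simp, ?_, rfl, ?_, ?_, ?_⟩
  · -- Nodup
    refine List.nodup_cons.2 ⟨?_, htnd.sublist t.dropLast_sublist⟩
    intro hu
    have heq : t.dropLast ++ [u] = t := by
      rw [← htlast]; exact t.dropLast_append_getLast htne
    have : t.Nodup := htnd
    rw [← heq, List.nodup_append] at this
    exact this.2.2 u hu u (by simp) rfl
  · -- membership
    intro x hx
    rcases List.mem_cons.1 hx with h | h
    · subst h; exact c.start_mem_support
    · rw [hsupp]; exact List.mem_cons_of_mem _ (t.dropLast_sublist.mem h)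
  · -- chain
    have hchain : List.Chain' G.Adj c.support := c.isChain_adj_support
    have hpre : (u :: t.dropLast) <+: c.support := by
      rw [hsupp]
      exact ⟨[t.getLast htne], by simp [t.dropLast_append_getLast htne]⟩
    exact hchain.prefix hpre
  · -- the back edge
    have hlenL : (u :: t.dropLast).length = c.length := by
      simp [List.length_dropLast, htlen]; omega
    refine ⟨⟨0, by omega⟩, by simp [hlenL]; omega, ?_⟩
    have hgl : (u :: t.dropLast).getLast (by simp) = t.dropLast.getLast hdne :=
      List.getLast_cons hdne
    rw [hgl]
    show G.Adj _ u
    -- last two of support are adjacent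
    have hsup_eq : c.support = (u :: t.dropLast) ++ [u] := by
      rw [hsupp]
      simp only [List.cons_append]
      congr 1
      rw [← htlast]; exact (t.dropLast_append_getLast htne).symm
    have hchain : List.IsChain G.Adj c.support := c.isChain_adj_support
    rw [hsup_eq, List.isChain_append] at hchain
    have := hchain.2.2 (t.dropLast.getLast hdne) ?_ u rfl
    · exact this
    · rw [List.getLast?_cons, List.getLast?_eq_getLast hdne]
      simp [List.getLastD_eq_getLast?, List.getLast?_eq_getLast hdne]

lemma key_lemma {V : Type*} [DecidableEq V] {G : SimpleGraph V} :
    ∀ {u v : V} (q : G.Walk u v) (p : G.Walk v v), q.IsPath → p.IsCycle →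
    ∃ (L : List V) (hne : L ≠ []), L.Nodup ∧ L.head hne = u ∧
      (∀ x ∈ L, x ∈ q.support ∨ x ∈ p.support) ∧ List.Chain' G.Adj L ∧
      ∃ j : Fin L.length, (j : ℕ) + 1 < L.length ∧ G.Adj (L.getLast hne) (L.get j) := by
  intro u v q
  induction q with
  | nil =>
    intro p _ hp
    obtain ⟨L, hne, h1, h2, h3, h4, h5⟩ := rot_lemma p hp
    exact ⟨L, hne, h1, h2, fun x hx => Or.inr (h3 x hx), h4, h5⟩
  | @cons a b c hadj q ih =>
    intro p hq hp
    by_cases hmem : a ∈ p.support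
    · obtain ⟨L, hne, h1, h2, h3, h4, h5⟩ := rot_lemma (p.rotate a hmem) (hp.rotate hmem)
      refine ⟨L, hne, h1, h2, fun x hx => Or.inr ?_, h4, h5⟩
      have hx' := h3 x hx
      rw [(p.rotate a hmem).support_eq_cons] at hx'
      rcases List.mem_cons.1 hx' with h | h
      · subst h; exact hmem
      · exact List.mem_of_mem_tail ((p.support_rotate a hmem).mem_iff.1 h)
    · obtain ⟨L, hne, h1, h2, h3, h4, h5⟩ := ih p hq.of_cons hp
      have haL : a ∉ L := by
        intro haL
        rcases h3 a haL with h | h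
        · exact ((SimpleGraph.Walk.cons_isPath_iff _ _).1 hq).2 h
        · exact hmem h
      refine ⟨a :: L, by simp, List.nodup_cons.2 ⟨haL, h1⟩, rfl, ?_, ?_, ?_⟩
      · intro x hx
        rcases List.mem_cons.1 hx with h | h
        · subst h; exact Or.inl (SimpleGraph.Walk.start_mem_support _)
        · rcases h3 x h with h' | h'
          · exact Or.inl (by rw [SimpleGraph.Walk.support_cons]; exact List.mem_cons_of_mem _ h')
          · exact Or.inr h'
      · refine List.isChain_cons.2 ⟨?_, h4⟩
        intro y hy
        rw [List.head?_eq_head hne] at hy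
        rw [h2] at hy
        cases hy
        exact hadj
      · obtain ⟨j, hj, hadj'⟩ := h5
        refine ⟨⟨(j : ℕ) + 1, by simp only [List.length_cons]; omega⟩, by simp only [List.length_cons]; omega, ?_⟩
        rw [List.getLast_cons hne]
        exact hadj'

theorem stmt_17 {ι : Type*} [Fintype ι] [DecidableEq ι] (S : ι → Type*)
    [∀ i, Fintype (S i)] (γ : Set (∀ i, S i)) (ω : ∀ i, S i) (hω : ω ∈ γ)
    (hknot : ∀ K, IsKnot γ K → ω ∉ K) :
    ∀ (v : γ) (p : (SimpleGraph.induce γ (DevP S)).Walk v v),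
      p.IsCycle → ¬ (SimpleGraph.induce γ (DevP S)).Reachable ⟨ω, hω⟩ v := by
  classical
  intro v p hcyc hreach
  obtain ⟨w⟩ := hreach
  obtain ⟨L, hne, h1, h2, h3, h4, j, hj, hadj'⟩ :=
    key_lemma (w.toPath : (SimpleGraph.induce γ (DevP S)).Walk ⟨ω, hω⟩ v) p
      w.toPath.2 hcyc
  have hAdjU : ∀ a b : γ, (SimpleGraph.induce γ (DevP S)).Adj a b →
      Unilateral (a : ∀ i, S i) (b : ∀ i, S i) := by
    intro a b hab
    have h : (DevP S).Adj (a : ∀ i, S i) (b : ∀ i, S i) := hab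
    rcases h.2 with h' | h'
    · exact h'
    · exact h'.symm
  set Lv := L.map Subtype.val with hLv
  have hneLv : Lv ≠ [] := fun h => hne (List.map_eq_nil_iff.1 h)
  have hωK : ω ∈ Lv := by
    have hh : L.head hne ∈ L := List.head_mem hne
    rw [h2] at hh
    exact List.mem_map.2 ⟨_, hh, rfl⟩
  refine hknot {s | s ∈ Lv} ⟨⟨ω, hωK⟩, ?_, Lv, hneLv, ?_, fun x => Iff.rfl, ?_, ?_⟩ hωK
  · intro s hs
    obtain ⟨a, _, rfl⟩ := List.mem_map.1 hs
    exact a.2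
  · exact h1.map Subtype.val_injective
  · exact List.isChain_map_of_isChain Subtype.val (fun a b hab => hAdjU a b hab) h4
  · have hlen : Lv.length = L.length := List.length_map _
    refine ⟨⟨j, by omega⟩, by simp only [hlen]; omega, ?_⟩
    have hgl : Lv.getLast hneLv = (L.getLast hne : ∀ i, S i) := by
      rw [List.getLast_eq_getElem, List.getLast_eq_getElem]
      simp only [hlen]
      exact List.getElem_map _
    have hgj : Lv.get ⟨j, by omega⟩ = (L.get j : ∀ i, S i) := by
      simp only [List.get_eq_getElem]
      exact List.getElem_map _
    rw [hgl, hgj]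
    exact hAdjU _ _ hadj'
end
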